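/- arXiv:2411.04833 — 3 statements merged into one kernel-verified Lean document; each statement's English description precedes it below -/
import Mathlib

section
/- Let ℓ ≥ 1 and let w_min, w_max : Fin ℓ → ℝ satisfy w_min i ≤ w_max i for every i, let B = {w ∈ EuclideanSpace ℝ (Fin ℓ) | ∀ i, w_min i ≤ w i ≤ w_max i}, and let ϑ(c) = ⨅ over w ∈ B of ⟪c, w⟫. Suppose c ∈ EuclideanSpace ℝ (Fin ℓ) satisfies c i ≠ 0 for every i, and let w* be defined by w* i = w_min i if c i > 0 and w* i = w_max i if c i < 0. Then ϑ is differentiable at c and its gradient at c equals w*; equivalently, the Fréchet derivative of ϑ at c is the continuous linear map v ↦ ⟪v, w*⟫. -/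
open scoped RealInnerProductSpace Topology

/-!
Near `c` every cost vector `d` has the same sign pattern as `c`, and for such `d` the vertex
`w*` of the box, chosen coordinatewise by the sign of `d`, minimises `⟪d, ·⟫` over the box.
Hence `ϑ` coincides with the linear map `⟪·, w*⟫` on a neighbourhood of `c`.
-/

namespace BoxLP

variable {ι : Type*}

def box (wmin wmax : ι → ℝ) : Set (EuclideanSpace ℝ ι) :=
  {w | ∀ i, wmin i ≤ w i ∧ w i ≤ wmax i}

lemma vertex_mem_box {wmin wmax : ι → ℝ} (hw : ∀ i, wmin i ≤ wmax i)
    {c wstar : EuclideanSpace ℝ ι} (hc : ∀ i, c i ≠ 0)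
    (hwstar : ∀ i, (0 < c i → wstar i = wmin i) ∧ (c i < 0 → wstar i = wmax i)) :
    wstar ∈ box wmin wmax := by
  intro i
  rcases (hc i).lt_or_gt with hneg | hpos
  · rw [(hwstar i).2 hneg]; exact ⟨hw i, le_rfl⟩
  · rw [(hwstar i).1 hpos]; exact ⟨le_rfl, hw i⟩

lemma isLeast_inner_box [Fintype ι] {wmin wmax : ι → ℝ} {d wstar : EuclideanSpace ℝ ι}
    (hmem : wstar ∈ box wmin wmax)
    (hsign : ∀ i, (0 < d i → wstar i = wmin i) ∧ (d i < 0 → wstar i = wmax i)) :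
    IsLeast ((fun w => ⟪d, w⟫) '' box wmin wmax) ⟪d, wstar⟫ := by
  refine ⟨⟨wstar, hmem, rfl⟩, ?_⟩
  rintro _ ⟨w, hw, rfl⟩
  simp only [PiLp.inner_apply, RCLike.inner_apply, conj_trivial]
  refine Finset.sum_le_sum fun i _ => ?_
  rcases lt_trichotomy (d i) 0 with hneg | hzero | hpos
  · rw [(hsign i).2 hneg]; exact mul_le_mul_of_nonpos_right (hw i).2 hneg.le
  · simp [hzero]
  · rw [(hsign i).1 hpos]; exact mul_le_mul_of_nonneg_right (hw i).1 hpos.le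

lemma eventually_mul_pos_nhds [Finite ι] {c : EuclideanSpace ℝ ι} (hc : ∀ i, c i ≠ 0) :
    ∀ᶠ d in 𝓝 c, ∀ i, 0 < d i * c i := by
  refine Filter.eventually_all.2 fun i => ?_
  have hcont : Continuous fun d : EuclideanSpace ℝ ι => d i * c i := by fun_prop
  exact continuousAt_const.eventually_lt hcont.continuousAt (mul_self_pos.2 (hc i))

end BoxLP

theorem box_LP_value_gradient_general (ℓ : ℕ)
    (wmin wmax : Fin ℓ → ℝ) (hw : ∀ i, wmin i ≤ wmax i)
    (B : Set (EuclideanSpace ℝ (Fin ℓ)))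
    (hB : B = {w : EuclideanSpace ℝ (Fin ℓ) | ∀ i, wmin i ≤ w i ∧ w i ≤ wmax i})
    (ϑ : EuclideanSpace ℝ (Fin ℓ) → ℝ)
    (hϑ : ∀ c, ϑ c = sInf ((fun w => ⟪c, w⟫) '' B))
    (c : EuclideanSpace ℝ (Fin ℓ)) (hc : ∀ i, c i ≠ 0)
    (wstar : EuclideanSpace ℝ (Fin ℓ))
    (hwstar : ∀ i, (c i > 0 → wstar i = wmin i) ∧ (c i < 0 → wstar i = wmax i)) :
    DifferentiableAt ℝ ϑ c ∧ HasGradientAt ϑ wstar c ∧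
      HasFDerivAt ϑ ((innerSL ℝ).flip wstar) c := by
  have hmem : wstar ∈ BoxLP.box wmin wmax := BoxLP.vertex_mem_box hw hc hwstar
  have heq : ϑ =ᶠ[𝓝 c] fun d => ⟪d, wstar⟫ := by
    filter_upwards [BoxLP.eventually_mul_pos_nhds hc] with d hd
    have hsign : ∀ i, (0 < d i → wstar i = wmin i) ∧ (d i < 0 → wstar i = wmax i) := fun i =>
      ⟨fun h => (hwstar i).1 ((pos_iff_pos_of_mul_pos (hd i)).1 h),
        fun h => (hwstar i).2 ((neg_iff_neg_of_mul_pos (hd i)).1 h)⟩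
    rw [hϑ, hB]
    exact (BoxLP.isLeast_inner_box hmem hsign).csInf_eq
  have hfd : HasFDerivAt ϑ ((innerSL ℝ).flip wstar) c :=
    ((innerSL ℝ).flip wstar).hasFDerivAt.congr_of_eventuallyEq heq
  refine ⟨hfd.differentiableAt, hasGradientAt_iff_hasFDerivAt.2 ?_, hfd⟩
  rwa [flip_innerSL_real] at hfd

/-- Sensitivity of the box-constrained LP value: if all components of `c` are
nonzero, then `ϑ` is differentiable at `c` with gradient `w*`, i.e. its
Fréchet derivative at `c` is `v ↦ ⟪v, w*⟫`. -/
theorem box_LP_value_gradient (ℓ : ℕ) (hℓ : 1 ≤ ℓ)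
    (wmin wmax : Fin ℓ → ℝ) (hw : ∀ i, wmin i ≤ wmax i)
    (B : Set (EuclideanSpace ℝ (Fin ℓ)))
    (hB : B = {w : EuclideanSpace ℝ (Fin ℓ) | ∀ i, wmin i ≤ w i ∧ w i ≤ wmax i})
    (ϑ : EuclideanSpace ℝ (Fin ℓ) → ℝ)
    (hϑ : ∀ c, ϑ c = sInf ((fun w => ⟪c, w⟫) '' B))
    (c : EuclideanSpace ℝ (Fin ℓ)) (hc : ∀ i, c i ≠ 0)
    (wstar : EuclideanSpace ℝ (Fin ℓ))
    (hwstar : ∀ i, (c i > 0 → wstar i = wmin i) ∧ (c i < 0 → wstar i = wmax i)) :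
    DifferentiableAt ℝ ϑ c ∧ HasGradientAt ϑ wstar c ∧
      HasFDerivAt ϑ ((innerSL ℝ).flip wstar) c :=
  box_LP_value_gradient_general ℓ wmin wmax hw B hB ϑ hϑ c hc wstar hwstar
end

section
/- Let ℓ, k ≥ 1, let A : Fin k → EuclideanSpace ℝ (Fin ℓ) be the rows of a constraint matrix and b : Fin k → ℝ, and let F = {w ∈ EuclideanSpace ℝ (Fin ℓ) | ∀ i, ⟪A i, w⟫ ≤ b i}. Assume F is nonempty and compact. Then the value function v(c) = ⨅ over w ∈ F of ⟪c, w⟫ is globally Lipschitz continuous with constant M = ⨆ over w ∈ F.extremePoints ℝ of ‖w‖₂; that is, |v(c) − v(c̃)| ≤ M · ‖c − c̃‖₂ for all c, c̃. -/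
open scoped RealInnerProductSpace

/-! By Krein–Milman, the compact convex set `F` lies in the closed convex hull of its extreme
points, hence in the closed ball of radius `M`. For a minimiser `w'` of `⟪c', ·⟫` on `F`,
`v c - v c' ≤ ⟪c, w'⟫ - ⟪c', w'⟫ = ⟪c - c', w'⟫ ≤ M ‖c - c'‖`, and symmetrically. -/

theorem convex_setOf_forall_inner_le {E ι : Type*} [NormedAddCommGroup E] [InnerProductSpace ℝ E]
    (a : ι → E) (b : ι → ℝ) : Convex ℝ {w : E | ∀ i, ⟪a i, w⟫ ≤ b i} := by
  rw [Set.ofPred_forall]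
  exact convex_iInter fun i => convex_halfSpace_le (innerₛₗ ℝ (a i)).isLinear (b i)

section KreinMilman

variable {E : Type*} [AddCommGroup E] [Module ℝ E] [TopologicalSpace E] [T2Space E]
  [IsTopologicalAddGroup E] [ContinuousSMul ℝ E] [LocallyConvexSpace ℝ E]

theorem IsCompact.subset_of_extremePoints_subset {K C : Set E} (hK : IsCompact K)
    (hKconv : Convex ℝ K) (hC : IsClosed C) (hCconv : Convex ℝ C)
    (hext : K.extremePoints ℝ ⊆ C) : K ⊆ C := by
  rw [← closure_convexHull_extremePoints hK hKconv]
  exact closure_minimal (convexHull_min hext hCconv) hC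

end KreinMilman

theorem IsCompact.norm_le_sSup_norm_extremePoints {E : Type*} [NormedAddCommGroup E]
    [NormedSpace ℝ E] {K : Set E} (hK : IsCompact K) (hKconv : Convex ℝ K) {x : E} (hx : x ∈ K) :
    ‖x‖ ≤ sSup ((fun w => ‖w‖) '' K.extremePoints ℝ) := by
  have hbdd : BddAbove ((fun w => ‖w‖) '' K.extremePoints ℝ) :=
    (hK.bddAbove_image continuous_norm.continuousOn).mono (Set.image_mono extremePoints_subset)
  have hext :
      K.extremePoints ℝ ⊆ Metric.closedBall 0 (sSup ((fun w => ‖w‖) '' K.extremePoints ℝ)) :=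
    fun w hw => mem_closedBall_zero_iff.2 (le_csSup hbdd ⟨w, hw, rfl⟩)
  exact mem_closedBall_zero_iff.1 <| hK.subset_of_extremePoints_subset hKconv
    Metric.isClosed_closedBall (convex_closedBall 0 _) hext hx

section ValueFunction

variable {E : Type*} [NormedAddCommGroup E] [InnerProductSpace ℝ E] {K : Set E}

theorem IsCompact.sInf_inner_sub_sInf_inner_le (hK : IsCompact K) (hne : K.Nonempty) {M : ℝ}
    (hM : ∀ w ∈ K, ‖w‖ ≤ M) (c c' : E) :
    sInf ((fun w => ⟪c, w⟫) '' K) - sInf ((fun w => ⟪c', w⟫) '' K) ≤ M * ‖c - c'‖ := by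
  have hcont (d : E) : Continuous fun w : E => ⟪d, w⟫ := continuous_const.inner continuous_id
  obtain ⟨w', hw'K, hw'inf⟩ := (hK.image (hcont c')).sInf_mem (hne.image _)
  have hvc : sInf ((fun w => ⟪c, w⟫) '' K) ≤ ⟪c, w'⟫ :=
    csInf_le (hK.bddBelow_image (hcont c).continuousOn) ⟨w', hw'K, rfl⟩
  calc sInf ((fun w => ⟪c, w⟫) '' K) - sInf ((fun w => ⟪c', w⟫) '' K)
      ≤ ⟪c - c', w'⟫ := by rw [← hw'inf, inner_sub_left]; linarith
    _ ≤ ‖c - c'‖ * ‖w'‖ := real_inner_le_norm _ _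
    _ ≤ ‖c - c'‖ * M := mul_le_mul_of_nonneg_left (hM w' hw'K) (norm_nonneg _)
    _ = M * ‖c - c'‖ := mul_comm _ _

theorem IsCompact.abs_sInf_inner_sub_sInf_inner_le (hK : IsCompact K) (hne : K.Nonempty) {M : ℝ}
    (hM : ∀ w ∈ K, ‖w‖ ≤ M) (c c' : E) :
    |sInf ((fun w => ⟪c, w⟫) '' K) - sInf ((fun w => ⟪c', w⟫) '' K)| ≤ M * ‖c - c'‖ := by
  refine abs_sub_le_iff.2 ⟨hK.sInf_inner_sub_sInf_inner_le hne hM c c', ?_⟩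
  simpa only [norm_sub_rev] using hK.sInf_inner_sub_sInf_inner_le hne hM c' c

end ValueFunction

theorem polyhedral_LP_value_lipschitz_general (ℓ k : ℕ)
    (A : Fin k → EuclideanSpace ℝ (Fin ℓ)) (b : Fin k → ℝ)
    (F : Set (EuclideanSpace ℝ (Fin ℓ)))
    (hF : F = {w : EuclideanSpace ℝ (Fin ℓ) | ∀ i, ⟪A i, w⟫ ≤ b i})
    (hne : F.Nonempty) (hcpt : IsCompact F)
    (v : EuclideanSpace ℝ (Fin ℓ) → ℝ)
    (hv : ∀ c, v c = sInf ((fun w => ⟪c, w⟫) '' F))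
    (M : ℝ) (hM : M = sSup ((fun w => ‖w‖) '' (F.extremePoints ℝ))) :
    ∀ c c' : EuclideanSpace ℝ (Fin ℓ), |v c - v c'| ≤ M * ‖c - c'‖ := by
  have hconv : Convex ℝ F := hF ▸ convex_setOf_forall_inner_le A b
  intro c c'
  rw [hv, hv]
  exact hcpt.abs_sInf_inner_sub_sInf_inner_le hne
    (fun w hw => hM ▸ hcpt.norm_le_sSup_norm_extremePoints hconv hw) c c'

/-- Theorem 1 (from Cánovas et al.) for a nonempty bounded polyhedron
`F = {w | Aw ≤ b}`: the LP value function is Lipschitz in the cost vector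
with constant the maximal norm of an extreme point of `F`. -/
theorem polyhedral_LP_value_lipschitz (ℓ k : ℕ) (hℓ : 1 ≤ ℓ) (hk : 1 ≤ k)
    (A : Fin k → EuclideanSpace ℝ (Fin ℓ)) (b : Fin k → ℝ)
    (F : Set (EuclideanSpace ℝ (Fin ℓ)))
    (hF : F = {w : EuclideanSpace ℝ (Fin ℓ) | ∀ i, ⟪A i, w⟫ ≤ b i})
    (hne : F.Nonempty) (hcpt : IsCompact F)
    (v : EuclideanSpace ℝ (Fin ℓ) → ℝ)
    (hv : ∀ c, v c = sInf ((fun w => ⟪c, w⟫) '' F))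
    (M : ℝ) (hM : M = sSup ((fun w => ‖w‖) '' (F.extremePoints ℝ))) :
    ∀ c c' : EuclideanSpace ℝ (Fin ℓ), |v c - v c'| ≤ M * ‖c - c'‖ :=
  polyhedral_LP_value_lipschitz_general ℓ k A b F hF hne hcpt v hv M hM
end

section
/- Let n, m ≥ 1 and let X be a subset of EuclideanSpace ℝ (Fin n). Let ν : X → EuclideanSpace ℝ (Fin n) (a normal field), φ : X → EuclideanSpace ℝ (Fin n) (a drift), and G : X → (EuclideanSpace ℝ (Fin m) →ₗ[ℝ] EuclideanSpace ℝ (Fin n)) (an input map). Let u_min, u_max : Fin m → ℝ satisfy u_min i ≤ u_max i for every i and set U = {u | ∀ i, u_min i ≤ u i ≤ u_max i}. Define b* : X → ℝ by b*(x) = ⨆ over u ∈ U of ⟪ν(x), φ(x) + G(x) u⟫, and assume b* is Lipschitz on X with constant L ≥ 0. Suppose a set S ⊆ X, points x₁, …, x_N ∈ X, and radii r₁, …, r_N ≥ 0 satisfy S ⊆ ⋃ᵢ closedBall(xᵢ, rᵢ) and b*(xᵢ) ≥ L · rᵢ for all i. Then for every x ∈ S there exists u ∈ U with ⟪ν(x),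 φ(x) + G(x) u⟫ ≥ 0. -/
open scoped RealInnerProductSpace

/-!
The Lipschitz bound transports the margin `b*(xᵢ) ≥ L·rᵢ` from a center to its whole ball, so
`b* ≥ 0` on `S`. Since the input box is compact and the normal flow is continuous in `u`, the
supremum defining `b*(x)` is attained, and a maximizer is the required admissible input.
-/

theorem isCompact_setOf_forall_mem_Icc {ι : Type*} [Fintype ι] (a b : ι → ℝ) :
    IsCompact {u : EuclideanSpace ℝ ι | ∀ i, a i ≤ u i ∧ u i ≤ b i} := by
  convert (PiLp.homeomorph 2 fun _ : ι => ℝ).isCompact_preimage.2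
    (isCompact_Icc (a := a) (b := b))
  ext u
  simp only [Set.mem_preimage, Set.mem_Icc, Pi.le_def, ← forall_and]
  rfl

theorem nonempty_setOf_forall_mem_Icc {ι : Type*} {a b : ι → ℝ} (hab : ∀ i, a i ≤ b i) :
    {u : EuclideanSpace ℝ ι | ∀ i, a i ≤ u i ∧ u i ≤ b i}.Nonempty :=
  ⟨WithLp.toLp 2 a, fun i => ⟨le_rfl, hab i⟩⟩

theorem nonneg_of_closedBall_cover_of_abs_sub_le {α : Type*} [PseudoMetricSpace α] {f : α → ℝ} {L : ℝ}
    (hL : 0 ≤ L) (hf : ∀ x y, |f x - f y| ≤ L * dist x y) {S : Set α} {ι : Type*} {c : ι → α}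
    {r : ι → ℝ} (hcover : S ⊆ ⋃ i, Metric.closedBall (c i) (r i)) (hc : ∀ i, L * r i ≤ f (c i)) :
    ∀ x ∈ S, 0 ≤ f x := by
  intro x hx
  obtain ⟨i, hi⟩ := Set.mem_iUnion.mp (hcover hx)
  have hdist : dist (c i) x ≤ r i := dist_comm x (c i) ▸ Metric.mem_closedBall.mp hi
  calc 0 ≤ f (c i) - L * r i := sub_nonneg.2 (hc i)
    _ ≤ f (c i) - L * dist (c i) x := by gcongr
    _ ≤ f x := by linarith [le_of_abs_le (hf (c i) x)]

theorem exists_mem_inner_add_eq_sSup {E F : Type*} [NormedAddCommGroup E] [InnerProductSpace ℝ E]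
    [NormedAddCommGroup F] [NormedSpace ℝ F] [FiniteDimensional ℝ F] {U : Set F}
    (hU : IsCompact U) (hne : U.Nonempty) (v w : E) (A : F →ₗ[ℝ] E) :
    ∃ u ∈ U, sSup ((fun u => ⟪v, w + A u⟫) '' U) = ⟪v, w + A u⟫ :=
  hU.exists_sSup_image_eq hne
    (continuous_const.inner (continuous_const.add A.continuous_of_finiteDimensional)).continuousOn

theorem safe_set_finite_verification_general (n m : ℕ)
    (X : Set (EuclideanSpace ℝ (Fin n)))
    (ν φ : X → EuclideanSpace ℝ (Fin n))
    (G : X → (EuclideanSpace ℝ (Fin m) →ₗ[ℝ] EuclideanSpace ℝ (Fin n)))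
    (umin umax : Fin m → ℝ) (hu : ∀ i, umin i ≤ umax i)
    (U : Set (EuclideanSpace ℝ (Fin m)))
    (hU : U = {u : EuclideanSpace ℝ (Fin m) | ∀ i, umin i ≤ u i ∧ u i ≤ umax i})
    (bstar : X → ℝ)
    (hbstar : ∀ x : X, bstar x = sSup ((fun u => ⟪ν x, φ x + G x u⟫) '' U))
    (L : ℝ) (hL : 0 ≤ L)
    (hlip : ∀ x y : X, |bstar x - bstar y| ≤ L * dist x y)
    (S : Set X) (N : ℕ) (xc : Fin N → X) (r : Fin N → ℝ)
    (hcover : S ⊆ ⋃ i, Metric.closedBall (xc i) (r i))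
    (hcenters : ∀ i, bstar (xc i) ≥ L * r i) :
    ∀ x ∈ S, ∃ u ∈ U, 0 ≤ ⟪ν x, φ x + G x u⟫ := by
  intro x hx
  have hbx : 0 ≤ bstar x := nonneg_of_closedBall_cover_of_abs_sub_le hL hlip hcover hcenters x hx
  subst hU
  obtain ⟨u, huU, hmax⟩ := exists_mem_inner_add_eq_sSup (isCompact_setOf_forall_mem_Icc umin umax)
    (nonempty_setOf_forall_mem_Icc hu) (ν x) (φ x) (G x)
  exact ⟨u, huU, hmax ▸ hbstar x ▸ hbx⟩

/-- Theorem 2 (main theorem): if the feasibility value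
`b*(x) = sup_{u ∈ U} ⟪ν(x), φ(x) + G(x) u⟫` is `L`-Lipschitz on `X`, the set
`S` is covered by finitely many closed balls around points `xᵢ`, and
`b*(xᵢ) ≥ L·rᵢ` at each center, then at every point of `S` some admissible
input `u ∈ U` produces a nonnegative normal flow component. -/
theorem safe_set_finite_verification (n m : ℕ) (hn : 1 ≤ n) (hm : 1 ≤ m)
    (X : Set (EuclideanSpace ℝ (Fin n)))
    (ν φ : X → EuclideanSpace ℝ (Fin n))
    (G : X → (EuclideanSpace ℝ (Fin m) →ₗ[ℝ] EuclideanSpace ℝ (Fin n)))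
    (umin umax : Fin m → ℝ) (hu : ∀ i, umin i ≤ umax i)
    (U : Set (EuclideanSpace ℝ (Fin m)))
    (hU : U = {u : EuclideanSpace ℝ (Fin m) | ∀ i, umin i ≤ u i ∧ u i ≤ umax i})
    (bstar : X → ℝ)
    (hbstar : ∀ x : X, bstar x = sSup ((fun u => ⟪ν x, φ x + G x u⟫) '' U))
    (L : ℝ) (hL : 0 ≤ L)
    (hlip : ∀ x y : X, |bstar x - bstar y| ≤ L * dist x y)
    (S : Set X) (N : ℕ) (xc : Fin N → X) (r : Fin N → ℝ) (hr : ∀ i, 0 ≤ r i)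
    (hcover : S ⊆ ⋃ i, Metric.closedBall (xc i) (r i))
    (hcenters : ∀ i, bstar (xc i) ≥ L * r i) :
    ∀ x ∈ S, ∃ u ∈ U, 0 ≤ ⟪ν x, φ x + G x u⟫ :=
  safe_set_finite_verification_general n m X ν φ G umin umax hu U hU bstar hbstar L hL hlip S N xc r
    hcover hcenters
end
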